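/- Let ω(λ) = λ² + λ⁴, let t > 0, let j ≥ 0 be an integer, and let ψ : ℂ → ℂ be continuous with lim_{A→∞} sup_{|λ|=A} |ψ(λ)| = 0. Then lim_{R→∞} ∫_{K ∩ {|λ|=R}} λ^{3−j} e^{−ω(λ)t} ψ(λ) dλ = 0 for each connected component K of the set {λ ∈ ℂ : Re(λ² + λ⁴) ≥ 0}, the arc K ∩ {|λ|=R} being traversed counterclockwise. -/

import Mathlib

/-!
On `|λ| = R` write `λ = R e^{iθ}` and `u = cos 2θ`. Then
`Re ω(λ) = R² u + R⁴ (2u² - 1) = 2R⁴ (u - a)(u + c)` with `a, c ∈ [0, 4/5]` and `a + c ≥ 1`, so on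
`{Re ω ≥ 0}` we have `Re ω ≥ 2R⁴ (u - a)` or `Re ω ≥ 2R⁴ (-u - c)`. By the chord bound
`cos y - cos x ≥ 2x(x - y)/π²`, `cos 2θ - a` grows linearly in the angular distance to the ends of
the arcs `{cos 2θ ≥ a}`, so `e^{-t Re ω}` is dominated there by six exponential peaks, each of
integral `O(1/(tR⁴))`. This compensates the factor `R⁴` coming from `|λ^{3-j} dλ| ≤ R⁴ dθ`, and
the integral over the whole of `{Re ω ≥ 0} ∩ {|λ| = R}` is `O(sup_{|λ| = R} |ψ| / t)`.
-/

open MeasureTheory Filter Complex Real Set Topology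

noncomputable section

/-- The region `{λ ∈ ℂ : Re(λ² + λ⁴) ≥ 0}`. -/
def S3 : Set ℂ := {l : ℂ | 0 ≤ ((l ^ 2 + l ^ 4).re)}

theorem two_mul_mul_sub_div_pi_sq_le_cos_sub_cos {x y : ℝ} (hy : 0 ≤ y) (hyx : y ≤ x)
    (hxy : x + y ≤ π) : 2 * x * (x - y) / π ^ 2 ≤ Real.cos y - Real.cos x := by
  have hsum : x / π ≤ Real.sin ((x + y) / 2) := by
    have := Real.mul_le_sin (x := (x + y) / 2) (by linarith) (by linarith)
    calc x / π = 2 / π * (x / 2) := by ring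
      _ ≤ 2 / π * ((x + y) / 2) := by gcongr; linarith
      _ ≤ _ := this
  have hdiff : (x - y) / π ≤ Real.sin ((x - y) / 2) := by
    have := Real.mul_le_sin (x := (x - y) / 2) (by linarith) (by linarith)
    calc (x - y) / π = 2 / π * ((x - y) / 2) := by ring
      _ ≤ _ := this
  have hx0 : 0 ≤ x / π := div_nonneg (by linarith) pi_pos.le
  calc 2 * x * (x - y) / π ^ 2 = 2 * ((x / π) * ((x - y) / π)) := by ring
    _ ≤ 2 * (Real.sin ((x + y) / 2) * Real.sin ((x - y) / 2)) := by
      gcongr 2 * ?_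
      exact mul_le_mul hsum hdiff (div_nonneg (by linarith) pi_pos.le) (hx0.trans hsum)
    _ = Real.cos y - Real.cos x := by
      rw [Real.cos_sub_cos, add_comm y x, show (y - x) / 2 = -((x - y) / 2) by ring,
        Real.sin_neg]
      ring

theorem half_le_arccos_of_le_four_fifths {A : ℝ} (hA : A ≤ 4 / 5) : 1 / 2 ≤ Real.arccos A := by
  have hcos : A ≤ Real.cos (1 / 2) := by
    have := Real.one_sub_sq_div_two_le_cos (x := 1 / 2); linarith
  calc (1 : ℝ) / 2 = Real.arccos (Real.cos (1 / 2)) := by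
        rw [Real.arccos_cos (by norm_num) (by linarith [pi_gt_three])]
    _ ≤ Real.arccos A := Real.arccos_le_arccos hcos

theorem arccos_sub_div_sixteen_le_cos_sub {A y : ℝ} (hA₀ : 0 ≤ A) (hA : A ≤ 4 / 5)
    (hy : 0 ≤ y) (hyA : y ≤ Real.arccos A) : (Real.arccos A - y) / 16 ≤ Real.cos y - A := by
  have hx := half_le_arccos_of_le_four_fifths hA
  have hxπ : Real.arccos A ≤ π / 2 := Real.arccos_le_pi_div_two.mpr hA₀
  have hchord := two_mul_mul_sub_div_pi_sq_le_cos_sub_cos hy hyA (by linarith)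
  rw [Real.cos_arccos (by linarith) (by linarith)] at hchord
  refine le_trans ?_ hchord
  rw [le_div_iff₀ (by positivity)]
  have hπ : π ^ 2 ≤ 16 := by nlinarith [pi_le_four, pi_pos]
  nlinarith [mul_le_mul_of_nonneg_left hπ (by linarith : 0 ≤ Real.arccos A - y)]

theorem exists_abs_sub_int_mul_two_pi_le_pi (z : ℝ) : ∃ k : ℤ, |z - k * (2 * π)| ≤ π := by
  refine ⟨round (z / (2 * π)), ?_⟩
  have h := abs_sub_round (z / (2 * π))
  have h2π : 0 < 2 * π := by positivity
  calc |z - round (z / (2 * π)) * (2 * π)| = |z / (2 * π) - round (z / (2 * π))| * (2 * π) := by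
        rw [← abs_of_pos h2π, ← abs_mul, abs_of_pos h2π, sub_mul, div_mul_cancel₀ _ h2π.ne']
    _ ≤ 1 / 2 * (2 * π) := by gcongr
    _ = π := by ring

theorem exists_exp_neg_mul_cos_sub_le {A z : ℝ} (hA₀ : 0 ≤ A) (hA : A ≤ 4 / 5)
    (hz : A ≤ Real.cos z) (l : ℝ) (hl : 0 ≤ l) : ∃ k : ℤ, |z - k * (2 * π)| ≤ Real.arccos A ∧
      Real.exp (-(l * (Real.cos z - A))) ≤
        Real.exp (-(l / 16 * (Real.arccos A - |z - k * (2 * π)|))) := by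
  obtain ⟨k, hk⟩ := exists_abs_sub_int_mul_two_pi_le_pi z
  have hcos : Real.cos |z - k * (2 * π)| = Real.cos z := by
    rw [Real.cos_abs, Real.cos_sub_int_mul_two_pi]
  have hle : |z - k * (2 * π)| ≤ Real.arccos A := by
    calc |z - k * (2 * π)| = Real.arccos (Real.cos |z - k * (2 * π)|) :=
          (Real.arccos_cos (abs_nonneg _) hk).symm
      _ ≤ Real.arccos A := Real.arccos_le_arccos (hcos ▸ hz)
  refine ⟨k, hle, ?_⟩
  have := arccos_sub_div_sixteen_le_cos_sub hA₀ hA (abs_nonneg _) hle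
  rw [hcos] at this
  rw [Real.exp_le_exp]
  nlinarith

theorem integral_exp_mul_add (a b : ℝ) {c : ℝ} (hc : c ≠ 0) (d : ℝ) :
    ∫ x in a..b, Real.exp (c * x + d) = (Real.exp (c * b + d) - Real.exp (c * a + d)) / c := by
  rw [intervalIntegral.integral_comp_mul_add (fun x => Real.exp x) hc, integral_exp, smul_eq_mul,
    inv_mul_eq_div]

def expPeak (μ h γ θ : ℝ) : ℝ :=
  (Icc (γ - h) (γ + h)).indicator (fun θ => Real.exp (-(μ * (h - |θ - γ|)))) θ

theorem expPeak_nonneg (μ h γ θ : ℝ) : 0 ≤ expPeak μ h γ θ :=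
  indicator_nonneg (fun _ _ => (Real.exp_pos _).le) θ

theorem expPeak_of_abs_sub_le {μ h γ θ : ℝ} (hθ : |θ - γ| ≤ h) :
    expPeak μ h γ θ = Real.exp (-(μ * (h - |θ - γ|))) := by
  rw [expPeak, indicator_of_mem]
  rw [mem_Icc]
  constructor <;> linarith [abs_le.mp hθ]

theorem integrable_expPeak (μ h γ : ℝ) : Integrable (expPeak μ h γ) :=
  (Continuous.integrableOn_Icc (by fun_prop)).integrable_indicator measurableSet_Icc

theorem integral_expPeak_le {μ h : ℝ} (hμ : 0 < μ) (hh : 0 ≤ h) (γ : ℝ) :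
    ∫ θ, expPeak μ h γ θ ≤ 2 / μ := by
  have hsplit : ∀ θ ∈ Icc (γ - h) (γ + h), Real.exp (-(μ * (h - |θ - γ|))) ≤
      Real.exp (μ * θ + -(μ * (γ + h))) + Real.exp (-μ * θ + μ * (γ - h)) := by
    intro θ _
    rcases abs_cases (θ - γ) with ⟨habs, -⟩ | ⟨habs, -⟩ <;> rw [habs]
    · have := (Real.exp_pos (-μ * θ + μ * (γ - h))).le
      rw [show -(μ * (h - (θ - γ))) = μ * θ + -(μ * (γ + h)) by ring]
      linarith
    · have := (Real.exp_pos (μ * θ + -(μ * (γ + h)))).le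
      rw [show -(μ * (h - -(θ - γ))) = -μ * θ + μ * (γ - h) by ring]
      linarith
  have hle : γ - h ≤ γ + h := by linarith
  calc ∫ θ, expPeak μ h γ θ = ∫ θ in Icc (γ - h) (γ + h), Real.exp (-(μ * (h - |θ - γ|))) :=
        integral_indicator measurableSet_Icc
    _ ≤ ∫ θ in Icc (γ - h) (γ + h),
          (Real.exp (μ * θ + -(μ * (γ + h))) + Real.exp (-μ * θ + μ * (γ - h))) :=
        setIntegral_mono_on (Continuous.integrableOn_Icc (by fun_prop))
          (Continuous.integrableOn_Icc (by fun_prop)) measurableSet_Icc hsplit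
    _ = (1 - Real.exp (-(2 * μ * h))) / μ + (1 - Real.exp (-(2 * μ * h))) / μ := by
      rw [integral_Icc_eq_integral_Ioc, ← intervalIntegral.integral_of_le hle,
        intervalIntegral.integral_add (Continuous.intervalIntegrable (by fun_prop) _ _)
          (Continuous.intervalIntegrable (by fun_prop) _ _),
        integral_exp_mul_add _ _ hμ.ne', integral_exp_mul_add _ _ (neg_ne_zero.mpr hμ.ne')]
      rw [show μ * (γ + h) + -(μ * (γ + h)) = 0 by ring,
        show μ * (γ - h) + -(μ * (γ + h)) = -(2 * μ * h) by ring,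
        show -μ * (γ + h) + μ * (γ - h) = -(2 * μ * h) by ring,
        show -μ * (γ - h) + μ * (γ - h) = 0 by ring, Real.exp_zero]
      field_simp
      ring
    _ ≤ 2 / μ := by
      have := (Real.exp_pos (-(2 * μ * h))).le
      rw [← add_div]; gcongr; linarith

/-- The arcs of `{θ | A ≤ cos (2θ - φ)}` that meet `(0, 2π]` are centred at `φ/2 + kπ`,
`k = 0, 1, 2`, when `0 ≤ A` and `0 ≤ φ ≤ π`. -/
def expComb (A l φ θ : ℝ) : ℝ :=
  ∑ k ∈ Finset.Icc (0 : ℤ) 2, expPeak (l / 8) (Real.arccos A / 2) (φ / 2 + k * π) θ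

theorem expComb_nonneg (A l φ θ : ℝ) : 0 ≤ expComb A l φ θ :=
  Finset.sum_nonneg fun _ _ => expPeak_nonneg _ _ _ θ

theorem integrable_expComb (A l φ : ℝ) : Integrable (expComb A l φ) :=
  integrable_finsetSum _ fun _ _ => integrable_expPeak _ _ _

theorem integral_expComb_le {l : ℝ} (hl : 0 < l) (A φ : ℝ) :
    ∫ θ, expComb A l φ θ ≤ 48 / l := by
  have hh : 0 ≤ Real.arccos A / 2 := div_nonneg (Real.arccos_nonneg A) zero_le_two
  calc ∫ θ, expComb A l φ θ
      = ∑ k ∈ Finset.Icc (0 : ℤ) 2, ∫ θ, expPeak (l / 8) (Real.arccos A / 2) (φ / 2 + k * π) θ :=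
        integral_finsetSum _ fun _ _ => integrable_expPeak _ _ _
    _ ≤ ∑ _k ∈ Finset.Icc (0 : ℤ) 2, 2 / (l / 8) :=
        Finset.sum_le_sum fun _ _ => integral_expPeak_le (by positivity) hh _
    _ = 48 / l := by
      rw [Finset.sum_const, show (Finset.Icc (0 : ℤ) 2).card = 3 from rfl, nsmul_eq_mul]
      field_simp
      norm_num

theorem exp_neg_mul_cos_sub_le_expComb {A l φ θ : ℝ} (hA₀ : 0 ≤ A) (hA : A ≤ 4 / 5)
    (hl : 0 ≤ l) (hφ : φ ∈ Icc 0 π) (hθ : θ ∈ Ioc 0 (2 * π)) (hAθ : A ≤ Real.cos (2 * θ - φ)) :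
    Real.exp (-(l * (Real.cos (2 * θ - φ) - A))) ≤ expComb A l φ θ := by
  obtain ⟨k, hk, hexp⟩ := exists_exp_neg_mul_cos_sub_le hA₀ hA hAθ l hl
  have hdist : |2 * θ - φ - k * (2 * π)| = 2 * |θ - (φ / 2 + k * π)| := by
    rw [show 2 * θ - φ - k * (2 * π) = 2 * (θ - (φ / 2 + k * π)) by ring, abs_mul, abs_two]
  have hxπ : Real.arccos A ≤ π / 2 := Real.arccos_le_pi_div_two.mpr hA₀
  have hkmem : k ∈ Finset.Icc (0 : ℤ) 2 := by
    obtain ⟨hk₁, hk₂⟩ := abs_le.mp hk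
    obtain ⟨hθ₁, hθ₂⟩ := hθ
    obtain ⟨hφ₁, hφ₂⟩ := hφ
    have hlo : (-1 : ℝ) < k := by
      by_contra! h
      nlinarith [pi_pos]
    have hhi : (k : ℝ) < 3 := by
      by_contra! h
      nlinarith [pi_pos]
    have hlo' : -1 < k := by exact_mod_cast hlo
    have hhi' : k < 3 := by exact_mod_cast hhi
    rw [Finset.mem_Icc]
    omega
  calc Real.exp (-(l * (Real.cos (2 * θ - φ) - A)))
      ≤ expPeak (l / 8) (Real.arccos A / 2) (φ / 2 + k * π) θ := by
        rw [expPeak_of_abs_sub_le (by linarith)]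
        convert hexp using 2
        rw [hdist]
        ring
    _ ≤ _ := Finset.single_le_sum
        (f := fun k : ℤ => expPeak (l / 8) (Real.arccos A / 2) (φ / 2 + k * π) θ)
        (fun _ _ => expPeak_nonneg _ _ _ θ) hkmem

theorem exists_root_bounds_quartic {R : ℝ} (hR : 2 ≤ R) : ∃ a c : ℝ,
    0 ≤ a ∧ a ≤ 4 / 5 ∧ 0 ≤ c ∧ c ≤ 4 / 5 ∧ ∀ u : ℝ, 0 ≤ R ^ 2 * u + R ^ 4 * (2 * u ^ 2 - 1) →
      (a ≤ u ∧ 2 * R ^ 4 * (u - a) ≤ R ^ 2 * u + R ^ 4 * (2 * u ^ 2 - 1)) ∨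
      (u ≤ -c ∧ 2 * R ^ 4 * (-u - c) ≤ R ^ 2 * u + R ^ 4 * (2 * u ^ 2 - 1)) := by
  set s := √(1 + 8 * R ^ 4)
  have hss : s ^ 2 = 1 + 8 * R ^ 4 := Real.sq_sqrt (by positivity)
  have hs0 : 0 ≤ s := Real.sqrt_nonneg _
  have hR2 : 4 ≤ R ^ 2 := by nlinarith
  have hslo : 2 * R ^ 2 + 1 ≤ s := by nlinarith
  have hshi : s ≤ 16 * R ^ 2 / 5 - 1 := by nlinarith
  have hden : 0 < 4 * R ^ 2 := by positivity
  set a := (s - 1) / (4 * R ^ 2) with ha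
  set c := (s + 1) / (4 * R ^ 2) with hc
  refine ⟨a, c, div_nonneg (by linarith) hden.le, ?_, by positivity, ?_, ?_⟩
  · rw [ha, div_le_iff₀ hden]; nlinarith
  · rw [hc, div_le_iff₀ hden]; nlinarith
  intro u hq
  have hfactor : R ^ 2 * u + R ^ 4 * (2 * u ^ 2 - 1) = 2 * R ^ 4 * ((u - a) * (u + c)) := by
    rw [ha, hc]
    field_simp
    linear_combination 2 * hss
  have hgap : 1 ≤ a + c := by
    rw [ha, hc, ← add_div, le_div_iff₀ hden]; linarith
  have hR4 : 0 < 2 * R ^ 4 := by positivity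
  rw [hfactor] at hq ⊢
  rcases le_or_gt a u with hau | hua
  · left
    refine ⟨hau, mul_le_mul_of_nonneg_left ?_ hR4.le⟩
    nlinarith
  · right
    have huc : u ≤ -c := by
      by_contra! h
      nlinarith [mul_pos hR4 (mul_pos (sub_pos.mpr hua) (by linarith : 0 < u + c))]
    refine ⟨huc, mul_le_mul_of_nonneg_left ?_ hR4.le⟩
    nlinarith

theorem re_sq_add_pow_four_mul_exp_I (R θ : ℝ) :
    (((R : ℂ) * Complex.exp (Complex.I * θ)) ^ 2 + ((R : ℂ) * Complex.exp (Complex.I * θ)) ^ 4).re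
      = R ^ 2 * Real.cos (2 * θ) + R ^ 4 * (2 * Real.cos (2 * θ) ^ 2 - 1) := by
  have hpow : ∀ n : ℕ, ((R : ℂ) * Complex.exp (Complex.I * θ)) ^ n
      = ((R ^ n : ℝ) : ℂ) * Complex.exp (((n * θ : ℝ) : ℂ) * Complex.I) := by
    intro n
    rw [mul_pow, ← Complex.exp_nat_mul]
    push_cast
    ring_nf
  rw [Complex.add_re, hpow, hpow, Complex.re_ofReal_mul, Complex.re_ofReal_mul,
    Complex.exp_ofReal_mul_I_re, Complex.exp_ofReal_mul_I_re,
    show ((4 : ℕ) : ℝ) * θ = 2 * (2 * θ) by push_cast; ring, Real.cos_two_mul]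
  push_cast
  ring

theorem exists_majorant_exp_neg_re {t R : ℝ} (ht : 0 < t) (hR : 2 ≤ R) :
    ∃ G : ℝ → ℝ, Integrable G ∧ (∀ θ, 0 ≤ G θ) ∧ ∫ θ, G θ ≤ 48 / (t * R ^ 4) ∧
      ∀ θ ∈ Ioc 0 (2 * π),
        0 ≤ (((R : ℂ) * Complex.exp (Complex.I * θ)) ^ 2
          + ((R : ℂ) * Complex.exp (Complex.I * θ)) ^ 4).re →
        Real.exp (-(t * (((R : ℂ) * Complex.exp (Complex.I * θ)) ^ 2
          + ((R : ℂ) * Complex.exp (Complex.I * θ)) ^ 4).re)) ≤ G θ := by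
  obtain ⟨a, c, ha₀, ha, hc₀, hc, hroots⟩ := exists_root_bounds_quartic hR
  have hl : 0 < 2 * t * R ^ 4 := by positivity
  refine ⟨fun θ => expComb a (2 * t * R ^ 4) 0 θ + expComb c (2 * t * R ^ 4) π θ,
    (integrable_expComb _ _ _).add (integrable_expComb _ _ _),
    fun θ => add_nonneg (expComb_nonneg _ _ _ θ) (expComb_nonneg _ _ _ θ), ?_, ?_⟩
  · rw [integral_add (integrable_expComb _ _ _) (integrable_expComb _ _ _)]
    calc _ ≤ 48 / (2 * t * R ^ 4) + 48 / (2 * t * R ^ 4) :=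
          add_le_add (integral_expComb_le hl _ _) (integral_expComb_le hl _ _)
      _ = 48 / (t * R ^ 4) := by field_simp; ring
  intro θ hθ hre
  rw [re_sq_add_pow_four_mul_exp_I] at hre ⊢
  have hcomb₀ := expComb_nonneg a (2 * t * R ^ 4) 0 θ
  have hcombπ := expComb_nonneg c (2 * t * R ^ 4) π θ
  rcases hroots _ hre with ⟨hau, hq⟩ | ⟨huc, hq⟩
  · have := exp_neg_mul_cos_sub_le_expComb ha₀ ha hl.le ⟨le_rfl, pi_pos.le⟩ hθ
      (by rwa [sub_zero])
    rw [sub_zero] at this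
    refine le_trans ?_ (le_add_of_le_of_nonneg this hcombπ)
    rw [Real.exp_le_exp]
    nlinarith
  · have := exp_neg_mul_cos_sub_le_expComb hc₀ hc hl.le ⟨pi_pos.le, le_rfl⟩ hθ
      (by rw [Real.cos_sub_pi]; linarith)
    rw [Real.cos_sub_pi] at this
    refine le_trans ?_ (le_add_of_nonneg_of_le hcomb₀ this)
    rw [Real.exp_le_exp]
    nlinarith

theorem norm_ofReal_mul_exp_I_mul {R : ℝ} (hR : 0 ≤ R) (θ : ℝ) :
    ‖(R : ℂ) * Complex.exp (Complex.I * θ)‖ = R := by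
  rw [norm_mul, Complex.norm_exp_I_mul_ofReal, Complex.norm_real, Real.norm_of_nonneg hR, mul_one]

theorem norm_integrand_le {R t ε θ : ℝ} (hR : 1 ≤ R) (j : ℕ) {ψ : ℂ → ℂ}
    (hψ : ‖ψ ((R : ℂ) * Complex.exp (Complex.I * θ))‖ ≤ ε) :
    ‖((R : ℂ) * Complex.exp (Complex.I * θ)) ^ ((3 : ℤ) - (j : ℤ))
      * Complex.exp (-(((R : ℂ) * Complex.exp (Complex.I * θ)) ^ 2
          + ((R : ℂ) * Complex.exp (Complex.I * θ)) ^ 4) * (t : ℂ))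
      * ψ ((R : ℂ) * Complex.exp (Complex.I * θ))
      * (Complex.I * (R : ℂ) * Complex.exp (Complex.I * θ))‖
    ≤ ε * R ^ 4 * Real.exp (-(t * (((R : ℂ) * Complex.exp (Complex.I * θ)) ^ 2
          + ((R : ℂ) * Complex.exp (Complex.I * θ)) ^ 4).re)) := by
  set z := (R : ℂ) * Complex.exp (Complex.I * θ)
  have hz : ‖z‖ = R := norm_ofReal_mul_exp_I_mul (by linarith) θ
  have hpow : ‖z ^ ((3 : ℤ) - (j : ℤ))‖ ≤ R ^ 3 := by
    rw [norm_zpow, hz, ← zpow_natCast]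
    exact zpow_le_zpow_right₀ hR (by omega)
  have hexp : ‖Complex.exp (-(z ^ 2 + z ^ 4) * (t : ℂ))‖ =
      Real.exp (-(t * (z ^ 2 + z ^ 4).re)) := by
    rw [Complex.norm_exp, neg_mul, Complex.neg_re, Complex.mul_re, Complex.ofReal_re,
      Complex.ofReal_im, mul_zero, sub_zero, mul_comm]
  have hdz : ‖Complex.I * (R : ℂ) * Complex.exp (Complex.I * θ)‖ = R := by
    rw [mul_assoc, norm_mul, Complex.norm_I, one_mul, hz]
  rw [norm_mul, norm_mul, norm_mul, hexp, hdz]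
  have hε : 0 ≤ ε := (norm_nonneg _).trans hψ
  calc ‖z ^ ((3 : ℤ) - (j : ℤ))‖ * Real.exp (-(t * (z ^ 2 + z ^ 4).re)) * ‖ψ z‖ * R
      ≤ R ^ 3 * Real.exp (-(t * (z ^ 2 + z ^ 4).re)) * ε * R := by gcongr
    _ = ε * R ^ 4 * Real.exp (-(t * (z ^ 2 + z ^ 4).re)) := by ring

theorem norm_setIntegral_arc_le {t R ε : ℝ} (ht : 0 < t) (hR : 2 ≤ R) (j : ℕ) {ψ : ℂ → ℂ}
    (hψ : ∀ l : ℂ, ‖l‖ = R → ‖ψ l‖ ≤ ε) {K : Set ℂ} (hK : K ⊆ S3) :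
    ‖∫ θ in {θ : ℝ | θ ∈ Ioc 0 (2*π) ∧ (R:ℂ) * Complex.exp (Complex.I * (θ:ℂ)) ∈ K},
          ((R:ℂ) * Complex.exp (Complex.I * (θ:ℂ))) ^ ((3:ℤ) - (j:ℤ))
            * Complex.exp (-(((R:ℂ) * Complex.exp (Complex.I * (θ:ℂ))) ^ 2
                + ((R:ℂ) * Complex.exp (Complex.I * (θ:ℂ))) ^ 4) * (t:ℂ))
            * ψ ((R:ℂ) * Complex.exp (Complex.I * (θ:ℂ)))
            * (Complex.I * (R:ℂ) * Complex.exp (Complex.I * (θ:ℂ)))‖ ≤ 48 * ε / t := by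
  obtain ⟨G, hG, hG₀, hGint, hGmaj⟩ := exists_majorant_exp_neg_re ht hR
  set f : ℝ → ℂ := fun θ => ((R:ℂ) * Complex.exp (Complex.I * (θ:ℂ))) ^ ((3:ℤ) - (j:ℤ))
            * Complex.exp (-(((R:ℂ) * Complex.exp (Complex.I * (θ:ℂ))) ^ 2
                + ((R:ℂ) * Complex.exp (Complex.I * (θ:ℂ))) ^ 4) * (t:ℂ))
            * ψ ((R:ℂ) * Complex.exp (Complex.I * (θ:ℂ)))
            * (Complex.I * (R:ℂ) * Complex.exp (Complex.I * (θ:ℂ)))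
  set S := {θ : ℝ | θ ∈ Ioc 0 (2 * π) ∧ (R : ℂ) * Complex.exp (Complex.I * θ) ∈ K}
  have hnorm := norm_ofReal_mul_exp_I_mul (by linarith : 0 ≤ R)
  have hε : 0 ≤ ε := (norm_nonneg _).trans (hψ _ (hnorm 0))
  set T := {θ : ℝ | θ ∈ Ioc 0 (2 * π) ∧ (R : ℂ) * Complex.exp (Complex.I * θ) ∈ S3}
  have hT : MeasurableSet T :=
    measurableSet_Ioc.inter (measurableSet_le (by fun_prop) (by fun_prop))
  have hbound : ∀ θ ∈ T, ‖f θ‖ ≤ ε * R ^ 4 * G θ := fun θ hθ =>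
    (norm_integrand_le (by linarith) j (hψ _ (hnorm θ))).trans
      (mul_le_mul_of_nonneg_left (hGmaj θ hθ.1 hθ.2) (by positivity))
  have hST : S ⊆ T := fun θ hθ => ⟨hθ.1, hK hθ.2⟩
  calc ‖∫ θ in S, f θ‖ ≤ ∫ θ in S, ε * R ^ 4 * G θ :=
        norm_integral_le_of_norm_le (hG.const_mul _).integrableOn
          (ae_restrict_of_ae_restrict_of_subset hST
            (ae_restrict_of_forall_mem hT hbound))
    _ ≤ ∫ θ, ε * R ^ 4 * G θ :=
        setIntegral_le_integral (hG.const_mul _) (Eventually.of_forall fun θ => by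
          have := hG₀ θ; positivity)
    _ ≤ ε * R ^ 4 * (48 / (t * R ^ 4)) := by
        rw [integral_const_mul]; gcongr
    _ = 48 * ε / t := by field_simp

theorem stmt3_general (t : ℝ) (ht : 0 < t) (j : ℕ) (ψ : ℂ → ℂ)
    (hdecay : ∀ ε : ℝ, 0 < ε → ∃ A₀ : ℝ, ∀ A : ℝ, A₀ ≤ A → ∀ l : ℂ, ‖l‖ = A → ‖ψ l‖ ≤ ε)
    (K : Set ℂ) (hK : ∃ l ∈ S3, K = connectedComponentIn S3 l) :
    Tendsto (fun R : ℝ =>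
        ∫ θ in {θ : ℝ | θ ∈ Ioc 0 (2*π) ∧ (R:ℂ) * Complex.exp (Complex.I * (θ:ℂ)) ∈ K},
          ((R:ℂ) * Complex.exp (Complex.I * (θ:ℂ))) ^ ((3:ℤ) - (j:ℤ))
            * Complex.exp (-(((R:ℂ) * Complex.exp (Complex.I * (θ:ℂ))) ^ 2
                + ((R:ℂ) * Complex.exp (Complex.I * (θ:ℂ))) ^ 4) * (t:ℂ))
            * ψ ((R:ℂ) * Complex.exp (Complex.I * (θ:ℂ)))
            * (Complex.I * (R:ℂ) * Complex.exp (Complex.I * (θ:ℂ)))) atTop (𝓝 0) := by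
  obtain ⟨l, -, rfl⟩ := hK
  rw [NormedAddGroup.tendsto_nhds_zero]
  intro ε hε
  obtain ⟨A₀, hA₀⟩ := hdecay (ε * t / 96) (by positivity)
  filter_upwards [eventually_ge_atTop (max 2 A₀)] with R hR
  calc _ ≤ 48 * (ε * t / 96) / t :=
        norm_setIntegral_arc_le ht (le_of_max_le_left hR) j (hA₀ R (le_of_max_le_right hR))
          (connectedComponentIn_subset S3 l)
    _ < ε := by field_simp; linarith

/-- Jordan-type lemma for the dispersion relation `ω(λ) = λ² + λ⁴`:
for any connected component `K` of `{Re ω ≥ 0}`, the integral of `λ^{3-j} e^{-ω(λ)t} ψ(λ)`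
over the counterclockwise arc `K ∩ {|λ| = R}` (parametrized by `λ = Re^{iθ}`) tends to `0`. -/
theorem stmt3 (t : ℝ) (ht : 0 < t) (j : ℕ) (ψ : ℂ → ℂ) (hcont : Continuous ψ)
    (hdecay : ∀ ε : ℝ, 0 < ε → ∃ A₀ : ℝ, ∀ A : ℝ, A₀ ≤ A → ∀ l : ℂ, ‖l‖ = A → ‖ψ l‖ ≤ ε)
    (K : Set ℂ) (hK : ∃ l ∈ S3, K = connectedComponentIn S3 l) :
    Tendsto (fun R : ℝ =>
        ∫ θ in {θ : ℝ | θ ∈ Ioc 0 (2*π) ∧ (R:ℂ) * Complex.exp (Complex.I * (θ:ℂ)) ∈ K},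
          ((R:ℂ) * Complex.exp (Complex.I * (θ:ℂ))) ^ ((3:ℤ) - (j:ℤ))
            * Complex.exp (-(((R:ℂ) * Complex.exp (Complex.I * (θ:ℂ))) ^ 2
                + ((R:ℂ) * Complex.exp (Complex.I * (θ:ℂ))) ^ 4) * (t:ℂ))
            * ψ ((R:ℂ) * Complex.exp (Complex.I * (θ:ℂ)))
            * (Complex.I * (R:ℂ) * Complex.exp (Complex.I * (θ:ℂ)))) atTop (𝓝 0) :=
  stmt3_general t ht j ψ hdecay K hK

end
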